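/- arXiv:2203.16992 — 2 statements merged into one kernel-verified Lean document; each statement's English description precedes it below -/
import Mathlib

section
/- Let G be a directed graph and let π : V → ℕ be a labeling such that (a) if x and y lie in distinct strongly connected components of G and there is a path from x to y, then π(x) < π(y), and (b) strongly connected vertices have equal labels. Let s be a vertex, V_s the set of vertices reachable from s, 𝒮_s the set of SCCs reachable from s, and 𝒮'_s an arbitrary subset of 𝒮_s. Suppose H is a subgraph of G induced-restricted to V_s with V(H) = V_s satisfying: (1) for each t ∈ V_s \ {s}, H contains an edge (v,t) with v ∈ ⋃𝒮'_s minimizing π(v) over all edges (v,t) of G[V_s] with v ∈ ⋃𝒮'_s, whenever such an edge exists; (2) for every pair (X,Y) ∈ (𝒮_s \ 𝒮'_s) × 𝒮_s, H contains some edge of G from X to Y if one exists; (3) for every S ∈ 𝒮_s, H restricted to S is strongly connected. Then every vertex of V_s is reachable from s in H. -/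
/-!
Induct on the label `π t`. If `t` is not strongly connected to `s`, a path from `s` to `t`
enters the SCC of `t` through an edge `u → w` with `π u < π t`. If `u ∈ Q`, condition (1) gives
an `H`-edge into `w` whose tail has label at most `π u`; otherwise condition (2) gives an
`H`-edge from the SCC of `u` into the SCC of `t`. Either tail is reachable in `H` by induction,
and `t` is then reached inside its SCC by (3).
-/

/-- Two vertices are strongly connected: each reaches the other. -/
def SConn {V : Type*} (E : V → V → Prop) (u v : V) : Prop :=
  Relation.ReflTransGen E u v ∧ Relation.ReflTransGen E v u

open Relation

namespace SConn

variable {V : Type*} {E : V → V → Prop} {u v w : V}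

protected theorem refl (E : V → V → Prop) (u : V) : SConn E u u :=
  ⟨ReflTransGen.refl, ReflTransGen.refl⟩

protected theorem symm (h : SConn E u v) : SConn E v u := ⟨h.2, h.1⟩

protected theorem trans (h : SConn E u v) (h' : SConn E v w) : SConn E u w :=
  ⟨h.1.trans h'.1, h'.2.trans h.2⟩

end SConn

theorem Relation.ReflTransGen.exists_edge_into_sconn {V : Type*} {E : V → V → Prop} {a t : V}
    (hp : ReflTransGen E a t) (hat : ¬ SConn E a t) :
    ∃ u w, ReflTransGen E a u ∧ E u w ∧ SConn E w t ∧ ¬ SConn E u t := by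
  induction hp using ReflTransGen.head_induction_on with
  | refl => exact absurd (SConn.refl E t) hat
  | @head x b hxb hbt ih =>
    by_cases hb : SConn E b t
    · exact ⟨x, b, .refl, hxb, hb, hat⟩
    · obtain ⟨u, w, hbu, huw, hwt, hut⟩ := ih hb
      exact ⟨u, w, .head hxb hbu, huw, hwt, hut⟩

theorem Relation.forall_reflTransGen_of_descent {α β : Type*} [Preorder β] [WellFoundedLT β]
    {r : α → α → Prop} {S : Set α} {a : α} (f : α → β)
    (h : ∀ t ∈ S, ReflTransGen r a t ∨ ∃ x ∈ S, f x < f t ∧ ReflTransGen r x t) :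
    ∀ t ∈ S, ReflTransGen r a t := by
  intro t
  induction t using (InvImage.wf f wellFounded_lt).induction with
  | _ t ih =>
    intro ht
    obtain hat | ⟨x, hx, hxt, hrxt⟩ := h t ht
    exacts [hat, (ih x hxt hx).trans hrxt]

theorem reach_subgraph_general
    {V : Type*} (E : V → V → Prop) (π : V → ℕ)
    (ha : ∀ x y, ¬ SConn E x y → Relation.ReflTransGen E x y → π x < π y)
    (hb : ∀ x y, SConn E x y → π x = π y)
    (s : V) (Vs : Set V) (hVs : Vs = {v | Relation.ReflTransGen E s v})
    (Q : Set V)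
    (H : V → V → Prop)
    (hHsub : ∀ x y, H x y → E x y ∧ x ∈ Vs ∧ y ∈ Vs)
    (h1 : ∀ t ∈ Vs, t ≠ s → (∃ v ∈ Q, E v t) →
      ∃ v ∈ Q, H v t ∧ ∀ v' ∈ Q, E v' t → π v ≤ π v')
    (h2 : ∀ x ∈ Vs, ∀ y ∈ Vs, x ∉ Q → ¬ SConn E x y →
      (∃ x' y', SConn E x x' ∧ SConn E y y' ∧ E x' y') →
      ∃ x' y', SConn E x x' ∧ SConn E y y' ∧ H x' y')
    (h3 : ∀ x ∈ Vs, ∀ y, SConn E x y →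
      Relation.ReflTransGen (fun a b => H a b ∧ SConn E a x ∧ SConn E b x) x y) :
    ∀ t ∈ Vs, Relation.ReflTransGen H s t := by
  subst hVs
  have reach_in_scc : ∀ w ∈ {v | ReflTransGen E s v}, ∀ t, SConn E w t → ReflTransGen H w t :=
    fun w hw t hwt => ReflTransGen.mono (fun _ _ h => h.1) _ _ (h3 w hw t hwt)
  refine forall_reflTransGen_of_descent π fun t ht => ?_
  by_cases hst : SConn E s t
  · exact .inl (reach_in_scc s .refl t hst)
  right
  obtain ⟨u, w, hsu, huw, hwt, hut⟩ := ReflTransGen.exists_edge_into_sconn ht hst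
  have hw : ReflTransGen E s w := hsu.tail huw
  have huw' : ¬ SConn E u w := fun h => hut (h.trans hwt)
  have hπu : π u < π t := hb w t hwt ▸ ha u w huw' (.single huw)
  by_cases huQ : u ∈ Q
  · obtain ⟨v, -, hvw, hmin⟩ := h1 w hw (fun hws => hst (hws ▸ hwt)) ⟨u, huQ, huw⟩
    exact ⟨v, (hHsub v w hvw).2.1, (hmin u huQ huw).trans_lt hπu,
      .head hvw (reach_in_scc w hw t hwt)⟩
  · obtain ⟨x, y, hux, hwy, hxy⟩ :=
      h2 u hsu w hw huQ huw' ⟨u, w, .refl E u, .refl E w, huw⟩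
    exact ⟨x, (hHsub x y hxy).2.1, hb u x hux ▸ hπu,
      .head hxy (reach_in_scc y (hHsub x y hxy).2.2 t (hwy.symm.trans hwt))⟩

/-- Let `π` be a labeling increasing along paths between distinct SCCs and
constant on SCCs. Let `Vs` be the set of vertices reachable from `s`, and `Q = ⋃𝒮'_s`
the union of an arbitrary subfamily of SCCs reachable from `s` (a subset of `Vs` closed
under strong connectivity). If `H ⊆ G[Vs]` (with vertex set `Vs`) is such that
(1) every `t ∈ Vs \ {s}` having an incoming `G`-edge from `Q` gets in `H` such an edge
whose tail minimizes `π` over all tails in `Q`,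
(2) for every pair of distinct reachable SCCs `(X,Y)` with `X ⊄ 𝒮'_s`, `H` contains
some `G`-edge from `X` to `Y` if one exists, and
(3) `H` restricted to each reachable SCC is strongly connected,
then every vertex of `Vs` is reachable from `s` in `H`. -/
theorem reach_subgraph
    {V : Type*} [Fintype V] (E : V → V → Prop) (π : V → ℕ)
    (ha : ∀ x y, ¬ SConn E x y → Relation.ReflTransGen E x y → π x < π y)
    (hb : ∀ x y, SConn E x y → π x = π y)
    (s : V) (Vs : Set V) (hVs : Vs = {v | Relation.ReflTransGen E s v})
    (Q : Set V) (hQsub : Q ⊆ Vs)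
    (hQclosed : ∀ x ∈ Q, ∀ y, SConn E x y → y ∈ Q)
    (H : V → V → Prop)
    (hHsub : ∀ x y, H x y → E x y ∧ x ∈ Vs ∧ y ∈ Vs)
    (h1 : ∀ t ∈ Vs, t ≠ s → (∃ v ∈ Q, E v t) →
      ∃ v ∈ Q, H v t ∧ ∀ v' ∈ Q, E v' t → π v ≤ π v')
    (h2 : ∀ x ∈ Vs, ∀ y ∈ Vs, x ∉ Q → ¬ SConn E x y →
      (∃ x' y', SConn E x x' ∧ SConn E y y' ∧ E x' y') →
      ∃ x' y', SConn E x x' ∧ SConn E y y' ∧ H x' y')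
    (h3 : ∀ x ∈ Vs, ∀ y, SConn E x y →
      Relation.ReflTransGen (fun a b => H a b ∧ SConn E a x ∧ SConn E b x) x y) :
    ∀ t ∈ Vs, Relation.ReflTransGen H s t :=
  reach_subgraph_general E π ha hb s Vs hVs Q H hHsub h1 h2 h3
end

section
/- Let G₀ be a digraph, let e₁ = (u₁,v₁), ..., e_k = (u_k,v_k) be a sequence of inserted edges, and let E⁺_l = {e₁,...,e_l}. For vertices u,v, let l_{u,v} be the minimal l ∈ {0,...,k} such that a u → v path exists in G₀ ∪ E⁺_l (∞ if none). Define paths P_{u,v} inductively: if l_{u,v} = 0, P_{u,v} is a fixed simple u → v path in G₀; otherwise, for l = l_{u,v}, P_{u,v} = P_{u,u_l} · e_l · P_{v_l,v}. Then for all u,v with l_{u,v} < ∞, the path P_{u,v} is simple. -/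
/- Induct on `l = l_{u,v}`, proving along the way that `P_{u,v}` is a walk in `G₀ ∪ E⁺_l`.
A `u → v` path in `G₀ ∪ E⁺_l` that is not in `G₀ ∪ E⁺_{l-1}` must use `e_l`, so `G₀ ∪ E⁺_{l-1}`
already connects `u` to `u_l` and `v_l` to `v`; hence both halves of `P_{u,v}` are simple walks in
`G₀ ∪ E⁺_{l-1}`. A vertex common to the halves would give a `u → v` path in `G₀ ∪ E⁺_{l-1}`,
contradicting the minimality of `l`. -/

/-- `p` is a walk in `E` from `a` to `b` (as its full list of vertices). -/
def IsWalkList {V : Type*} (E : V → V → Prop) (p : List V) (a b : V) : Prop :=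
  p.head? = some a ∧ p.getLast? = some b ∧ List.Chain' E p

open Relation

theorem Relation.ReflTransGen.or_through_new_edge {α : Type*} {r s : α → α → Prop} {a b u v : α}
    (hs : ∀ x y, s x y → r x y ∨ x = a ∧ y = b) (h : ReflTransGen s u v) :
    ReflTransGen r u v ∨ (ReflTransGen r u a ∧ ReflTransGen r b v) := by
  induction h with
  | refl => exact .inl .refl
  | tail _ hcd ih =>
    rcases hs _ _ hcd with hcd | ⟨rfl, rfl⟩
    · exact ih.imp (·.tail hcd) fun h => ⟨h.1, h.2.tail hcd⟩
    · exact .inr ⟨ih.elim id (·.1), .refl⟩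

namespace IsWalkList

variable {V : Type*} {E E' : V → V → Prop} {p q : List V} {a b c d w : V}

theorem mono (hEE' : ∀ x y, E x y → E' x y) (h : IsWalkList E p a b) : IsWalkList E' p a b :=
  ⟨h.1, h.2.1, h.2.2.imp fun x y => hEE' x y⟩

theorem ne_nil (h : IsWalkList E p a b) : p ≠ [] := by
  rintro rfl
  simp [IsWalkList] at h

theorem reflTransGen (h : IsWalkList E p a b) : ReflTransGen E a b := by
  have hne := h.ne_nil
  obtain ⟨hhead, hlast, hchain⟩ := h
  rw [List.head?_eq_some_head hne, Option.some.injEq] at hhead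
  rw [List.getLast?_eq_some_getLast hne, Option.some.injEq] at hlast
  exact hhead ▸ hlast ▸ List.relationReflTransGen_of_exists_isChain p hchain hne

theorem reflTransGen_of_mem (h : IsWalkList E p a b) (hw : w ∈ p) :
    ReflTransGen E a w ∧ ReflTransGen E w b := by
  obtain ⟨hhead, hlast, hchain⟩ := h
  obtain ⟨s, t, rfl⟩ := List.append_of_mem hw
  refine ⟨reflTransGen (p := s ++ [w]) ⟨?_, by simp, ?_⟩,
    reflTransGen (p := w :: t) ⟨rfl, ?_, hchain.right_of_append⟩⟩
  · cases s <;> simpa using hhead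
  · exact hchain.prefix ⟨t, by simp⟩
  · rwa [List.getLast?_append_cons] at hlast

theorem append (hp : IsWalkList E p a b) (hq : IsWalkList E q c d) (hbc : E b c) :
    IsWalkList E (p ++ q) a d := by
  refine ⟨?_, ?_, hp.2.2.append hq.2.2 ?_⟩
  · rw [List.head?_append_of_ne_nil _ hp.ne_nil, hp.1]
  · rw [List.getLast?_append_of_ne_nil _ hq.ne_nil, hq.2.1]
  · rw [hp.2.1, hq.1]
    intro x hx y hy
    rw [Option.mem_some_iff] at hx hy
    exact hx ▸ hy ▸ hbc

theorem nodup_append (hp : IsWalkList E p a b) (hq : IsWalkList E q c d) (hpn : p.Nodup)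
    (hqn : q.Nodup) (had : ¬ReflTransGen E a d) : (p ++ q).Nodup :=
  hpn.append hqn fun _ hwp hwq =>
    had ((hp.reflTransGen_of_mem hwp).1.trans (hq.reflTransGen_of_mem hwq).2)

end IsWalkList

section Layers

variable {V : Type*} {E0 : V → V → Prop} {k : ℕ} {eu ev : Fin k → V} {El : ℕ → V → V → Prop}

theorem layer_mono
    (hEl : ∀ (l : ℕ) (x y : V), El l x y ↔
      (E0 x y ∨ ∃ i : Fin k, (i : ℕ) < l ∧ eu i = x ∧ ev i = y))
    {l l' : ℕ} (hll' : l ≤ l') (x y : V) (h : El l x y) : El l' x y := by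
  rw [hEl] at h ⊢
  exact h.imp_right fun ⟨i, hi, hx, hy⟩ => ⟨i, hi.trans_le hll', hx, hy⟩

theorem layer_succ_cases
    (hEl : ∀ (l : ℕ) (x y : V), El l x y ↔
      (E0 x y ∨ ∃ i : Fin k, (i : ℕ) < l ∧ eu i = x ∧ ev i = y))
    (i : Fin k) (x y : V) (h : El (i + 1) x y) : El i x y ∨ x = eu i ∧ y = ev i := by
  rw [hEl] at h
  rw [hEl]
  rcases h with h | ⟨j, hj, rfl, rfl⟩
  · exact .inl (.inl h)
  · rcases (Nat.lt_succ_iff.1 hj).lt_or_eq with hji | hji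
    · exact .inl (.inr ⟨j, hji, rfl, rfl⟩)
    · exact .inr (Fin.ext hji ▸ ⟨rfl, rfl⟩)

end Layers

/-- with `El l` the graph `G₀` plus the first `l` inserted edges
`(eu i, ev i)` (edge number `i+1` for `i : Fin k`), `lfun u v` the minimal `l` such that
`El l` contains a `u → v` path (when one exists for some `l ≤ k`), and paths `P u v`
defined inductively — a fixed simple `G₀`-path when `lfun u v = 0`, and
`P u (eu i) · (eu i, ev i) · P (ev i) v` where `i + 1 = lfun u v` otherwise — every
defined path `P u v` is simple. -/
theorem inductive_paths_simple
    {V : Type*} (E0 : V → V → Prop) (k : ℕ) (eu ev : Fin k → V)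
    (El : ℕ → V → V → Prop)
    (hEl : ∀ (l : ℕ) (x y : V), El l x y ↔
      (E0 x y ∨ ∃ i : Fin k, (i : ℕ) < l ∧ eu i = x ∧ ev i = y))
    (lfun : V → V → ℕ)
    (hlmin : ∀ u v, (∃ l ≤ k, Relation.ReflTransGen (El l) u v) →
      (lfun u v ≤ k ∧ Relation.ReflTransGen (El (lfun u v)) u v ∧
       ∀ l', Relation.ReflTransGen (El l') u v → lfun u v ≤ l'))
    (P : V → V → List V)
    (hbase : ∀ u v, (∃ l ≤ k, Relation.ReflTransGen (El l) u v) → lfun u v = 0 →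
      IsWalkList E0 (P u v) u v ∧ (P u v).Nodup)
    (hind : ∀ u v, (∃ l ≤ k, Relation.ReflTransGen (El l) u v) → 1 ≤ lfun u v →
      ∃ i : Fin k, (i : ℕ) + 1 = lfun u v ∧ P u v = P u (eu i) ++ P (ev i) v) :
    ∀ u v, (∃ l ≤ k, Relation.ReflTransGen (El l) u v) → (P u v).Nodup := by
  suffices h : ∀ n u v, (∃ l ≤ k, ReflTransGen (El l) u v) → lfun u v = n →
      IsWalkList (El n) (P u v) u v ∧ (P u v).Nodup from
    fun u v huv => (h _ u v huv rfl).2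
  intro n
  induction n using Nat.strong_induction_on with
  | _ n IH =>
  rintro u v huv rfl
  obtain h0 | hpos := Nat.eq_zero_or_pos (lfun u v)
  · rw [h0]
    exact (hbase u v huv h0).imp_left (·.mono fun x y h => (hEl 0 x y).2 (.inl h))
  obtain ⟨i, hi, hP⟩ := hind u v huv hpos
  obtain ⟨-, hreach, hmin⟩ := hlmin u v huv
  have hnot : ¬ReflTransGen (El i) u v := fun h => by have := hmin i h; omega
  obtain ⟨hua, hbv⟩ :=
    ((hi ▸ hreach).or_through_new_edge (layer_succ_cases hEl i)).resolve_left hnot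
  have halves : ∀ x y, ReflTransGen (El i) x y →
      IsWalkList (El i) (P x y) x y ∧ (P x y).Nodup := fun x y hxy =>
    have hxy' : ∃ l ≤ k, ReflTransGen (El l) x y := ⟨i, i.2.le, hxy⟩
    have hle : lfun x y ≤ i := (hlmin x y hxy').2.2 i hxy
    (IH _ (by omega) x y hxy' rfl).imp_left (·.mono (layer_mono hEl hle))
  obtain ⟨hW₁, hN₁⟩ := halves _ _ hua
  obtain ⟨hW₂, hN₂⟩ := halves _ _ hbv
  have hedge : El (i + 1) (eu i) (ev i) := (hEl _ _ _).2 (.inr ⟨i, Nat.lt_succ_self _, rfl, rfl⟩)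
  rw [hP, ← hi]
  have hup := layer_mono hEl (Nat.le_succ i)
  exact ⟨(hW₁.mono hup).append (hW₂.mono hup) hedge, hW₁.nodup_append hW₂ hN₁ hN₂ hnot⟩
end
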